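/- Let Λ be a finite set, m>0, and let p:Λ×Λ→[0,∞) satisfy p(i,i)=0 and the doubly-stochastic-modulo-a-constant condition: for all i,k∈Λ, ∑_{j∈Λ}(p(i,j) − p(j,k)) = 0. For 0≤φ<1 let ν_φ be the product probability measure on ℕ^Λ whose marginal at every site is ν_φ(n) = (1−φ)^{m/2} φ^n Γ(m/2+n)/(n! Γ(m/2)). Then ν_φ is stationary for the inclusion process generator: for every bounded function f:ℕ^Λ→ℝ, ∑_{η∈ℕ^Λ} ν_φ(η) ∑_{i,j∈Λ} p(i,j) η_i (m/2 + η_j)(f(η^{i,j}) − f(η)) = 0, where η^{i,j} is obtained from η by moving one particle from site i to site j (the double sum over η being absolutely convergent). -/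

import Mathlib

/-!
The product measure `ν_φ` balances every single jump: writing `η = ζ + e_i`, the flux
`ν_φ(η) η_i (m/2 + η_j)` from `η` to `η^{i,j} = ζ + e_j` and the flux
`ν_φ(η^{i,j}) η^{i,j}_j (m/2 + η^{i,j}_i)` back are both `φ (m/2 + ζ_i)(m/2 + ζ_j) ν_φ(ζ)`,
by the recursion `(n+1) ν_φ(n+1) = φ (m/2 + n) ν_φ(n)` of the marginal. Hence the gain term
of the pair `(i,j)` is the loss term of the pair `(j,i)`, and the generator averages to
`(m/2) ∑_{i,j} p(i,j) (E[η_j f] - E[η_i f])`, which vanishes because `p` has equal row and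
column sums.
-/

open Filter Topology MeasureTheory

/-- The configuration obtained from `η` by moving one particle from site `i` to site `j`. -/
def moveParticle {Λ : Type*} [DecidableEq Λ] (η : Λ → ℕ) (i j : Λ) : Λ → ℕ :=
  fun k => if k = i then η i - 1 else if k = j then η j + 1 else η k

/-- Single-site marginal of the stationary product measure of the inclusion process:
`ν_φ(n) = (1−φ)^{m/2} φ^n Γ(m/2+n)/(n! Γ(m/2))`. -/
noncomputable def nuMarginal (m φ : ℝ) (n : ℕ) : ℝ :=
  (1 - φ) ^ (m / 2) * φ ^ n * Real.Gamma (m / 2 + n) / (n.factorial * Real.Gamma (m / 2))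

/-- The product measure `ν_φ` on `ℕ^Λ` with the above marginal at every site. -/
noncomputable def nuProd {Λ : Type*} [Fintype Λ] (m φ : ℝ) (η : Λ → ℕ) : ℝ :=
  ∏ i, nuMarginal m φ (η i)

open Finset

theorem summable_pi_prod_of_nonneg {Λ β : Type*} [Fintype Λ] {g : β → ℝ}
    (h0 : ∀ b, 0 ≤ g b) (hg : Summable g) : Summable fun η : Λ → β => ∏ k, g (η k) := by
  classical
  refine summable_of_sum_le (c := ∏ _k : Λ, ∑' b, g b)
    (fun η => prod_nonneg fun k _ => h0 _) fun u => ?_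
  let t : Λ → Finset β := fun k => u.image (· k)
  calc ∑ η ∈ u, ∏ k, g (η k)
      ≤ ∑ η ∈ Fintype.piFinset t, ∏ k, g (η k) :=
        sum_le_sum_of_subset_of_nonneg
          (fun η hη => Fintype.mem_piFinset.2 fun k => mem_image_of_mem _ hη)
          (fun η _ _ => prod_nonneg fun k _ => h0 _)
    _ = ∏ k, ∑ b ∈ t k, g b := (prod_univ_sum t fun _ => g).symm
    _ ≤ ∏ _k : Λ, ∑' b, g b :=
        prod_le_prod (fun k _ => sum_nonneg fun b _ => h0 b)
          fun k _ => hg.sum_le_tsum _ fun b _ => h0 b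

theorem sum_sum_mul_sub_eq_zero {Λ : Type*} [Fintype Λ] {p : Λ → Λ → ℝ}
    (hp : ∀ i, ∑ j, p i j = ∑ j, p j i) (B : Λ → ℝ) :
    ∑ i, ∑ j, p i j * (B j - B i) = 0 := by
  have hgain : ∑ i, ∑ j, p i j * B j = ∑ j, (∑ i, p j i) * B j := by
    rw [sum_comm]
    simp only [← sum_mul]
    exact sum_congr rfl fun j _ => by rw [hp]
  simp only [mul_sub, sum_sub_distrib, hgain, ← sum_mul, sub_self]

section Marginal

variable {m φ : ℝ}

theorem nuMarginal_nonneg (hm : 0 < m) (hφ0 : 0 ≤ φ) (hφ1 : φ ≤ 1) (n : ℕ) :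
    0 ≤ nuMarginal m φ n := by
  have := Real.Gamma_pos_of_pos (by positivity : 0 < m / 2 + n)
  have := Real.Gamma_pos_of_pos (by positivity : 0 < m / 2)
  have := Real.rpow_nonneg (sub_nonneg.2 hφ1) (m / 2)
  unfold nuMarginal
  positivity

theorem nuMarginal_succ (hm : 0 < m) (n : ℕ) :
    (n + 1) * nuMarginal m φ (n + 1) = φ * (m / 2 + n) * nuMarginal m φ n := by
  have hΓ : Real.Gamma (m / 2 + (n + 1 : ℕ)) = (m / 2 + n) * Real.Gamma (m / 2 + n) := by
    rw [Nat.cast_succ, ← add_assoc, Real.Gamma_add_one (by positivity)]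
  have := (Real.Gamma_pos_of_pos (by positivity : 0 < m / 2)).ne'
  unfold nuMarginal
  rw [hΓ, Nat.factorial_succ]
  push_cast
  field_simp
  ring

theorem summable_add_mul_nuMarginal (hm : 0 < m) (hφ0 : 0 ≤ φ) (hφ1 : φ < 1) :
    Summable fun n : ℕ => (m / 2 + n) * nuMarginal m φ n := by
  obtain ⟨N, hN⟩ := exists_nat_ge (φ * m / (1 - φ))
  refine summable_of_ratio_norm_eventually_le (r := (1 + φ) / 2) (by linarith) ?_
  filter_upwards [eventually_ge_atTop N] with n hn
  have hν := nuMarginal_nonneg hm hφ0 hφ1.le n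
  have hratio : φ * (m / 2 + n + 1) ≤ (1 + φ) / 2 * (n + 1) := by
    have : φ * m ≤ (1 - φ) * n :=
      (div_le_iff₀' (by linarith)).1 (hN.trans (Nat.cast_le.2 hn))
    linarith
  rw [Real.norm_of_nonneg (mul_nonneg (by positivity) (nuMarginal_nonneg hm hφ0 hφ1.le _)),
    Real.norm_of_nonneg (by positivity)]
  refine le_of_mul_le_mul_left ?_ (by positivity : (0 : ℝ) < n + 1)
  calc (n + 1) * ((m / 2 + (n + 1 : ℕ)) * nuMarginal m φ (n + 1))
      = φ * (m / 2 + n + 1) * ((m / 2 + n) * nuMarginal m φ n) := by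
        push_cast
        linear_combination (m / 2 + n + 1) * nuMarginal_succ (φ := φ) hm n
    _ ≤ (1 + φ) / 2 * (n + 1) * ((m / 2 + n) * nuMarginal m φ n) := by gcongr
    _ = (n + 1) * ((1 + φ) / 2 * ((m / 2 + n) * nuMarginal m φ n)) := by ring

theorem summable_add_add_one_mul_nuMarginal (hm : 0 < m) (hφ0 : 0 ≤ φ) (hφ1 : φ < 1) :
    Summable fun n : ℕ => (m / 2 + n + 1) * nuMarginal m φ n := by
  refine .of_nonneg_of_le
    (fun n => mul_nonneg (by positivity) (nuMarginal_nonneg hm hφ0 hφ1.le n)) (fun n => ?_)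
    ((summable_add_mul_nuMarginal hm hφ0 hφ1).mul_left (1 + 2 / m))
  have hν := nuMarginal_nonneg hm hφ0 hφ1.le n
  have : 1 ≤ 2 / m * (m / 2 + n) := by
    rw [mul_add, div_mul_div_cancel₀ hm.ne', div_self two_ne_zero]
    have : 0 ≤ 2 / m * n := by positivity
    linarith
  nlinarith

end Marginal

def addParticle {Λ : Type*} [DecidableEq Λ] (ζ : Λ → ℕ) (i : Λ) : Λ → ℕ :=
  ζ + Pi.single i 1

section Particles

variable {Λ : Type*} [DecidableEq Λ]

@[simp]
theorem addParticle_apply_self (ζ : Λ → ℕ) (i : Λ) : addParticle ζ i i = ζ i + 1 := by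
  simp [addParticle]

@[simp]
theorem addParticle_apply_of_ne (ζ : Λ → ℕ) {i k : Λ} (hki : k ≠ i) :
    addParticle ζ i k = ζ k := by
  simp [addParticle, hki]

theorem addParticle_injective (i : Λ) :
    Function.Injective fun ζ : Λ → ℕ => addParticle ζ i :=
  add_left_injective _

theorem moveParticle_addParticle {i j : Λ} (hij : i ≠ j) (ζ : Λ → ℕ) :
    moveParticle (addParticle ζ i) i j = addParticle ζ j := by
  funext k
  rcases eq_or_ne k i with rfl | hki
  · simp [moveParticle, hij]
  · rcases eq_or_ne k j with rfl | hkj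
    · simp [moveParticle, hki]
    · simp [moveParticle, hki, hkj]

theorem tsum_eq_tsum_addParticle {α : Type*} [AddCommMonoid α] [TopologicalSpace α]
    {g : (Λ → ℕ) → α} (i : Λ) (hg : ∀ η, η i = 0 → g η = 0) :
    ∑' η, g η = ∑' ζ, g (addParticle ζ i) := by
  refine ((addParticle_injective i).tsum_eq fun η hη =>
    ⟨η - Pi.single i 1, funext fun k => ?_⟩).symm
  have hηi : η i ≠ 0 := fun h => hη (hg η h)
  rcases eq_or_ne k i with rfl | hki
  · simp only [addParticle, Pi.add_apply, Pi.sub_apply, Pi.single_eq_same]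
    omega
  · simp [addParticle, hki]

end Particles

section Product

variable {Λ : Type*} [Fintype Λ] {m φ : ℝ}

theorem nuProd_nonneg (hm : 0 < m) (hφ0 : 0 ≤ φ) (hφ1 : φ ≤ 1) (η : Λ → ℕ) :
    0 ≤ nuProd m φ η :=
  prod_nonneg fun k _ => nuMarginal_nonneg hm hφ0 hφ1 (η k)

theorem nuProd_addParticle_mul [DecidableEq Λ] (hm : 0 < m) (ζ : Λ → ℕ) (i : Λ) :
    nuProd m φ (addParticle ζ i) * (ζ i + 1) = φ * (m / 2 + ζ i) * nuProd m φ ζ := by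
  have hrest : ∏ k ∈ {i}ᶜ, nuMarginal m φ (addParticle ζ i k) =
      ∏ k ∈ {i}ᶜ, nuMarginal m φ (ζ k) :=
    prod_congr rfl fun k hk => by rw [addParticle_apply_of_ne ζ (by simpa using hk)]
  rw [nuProd, nuProd, Fintype.prod_eq_mul_prod_compl i, Fintype.prod_eq_mul_prod_compl i, hrest,
    addParticle_apply_self]
  linear_combination
    (∏ k ∈ {i}ᶜ, nuMarginal m φ (ζ k)) * nuMarginal_succ (φ := φ) hm (ζ i)

theorem nuProd_addParticle_mul_rate [DecidableEq Λ] (hm : 0 < m) {i j : Λ} (hij : i ≠ j)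
    (ζ : Λ → ℕ) :
    nuProd m φ (addParticle ζ i) *
        ((addParticle ζ i i : ℝ) * (m / 2 + (addParticle ζ i j : ℝ))) =
      φ * (m / 2 + ζ i) * (m / 2 + ζ j) * nuProd m φ ζ := by
  rw [addParticle_apply_self, addParticle_apply_of_ne ζ hij.symm]
  push_cast
  linear_combination (m / 2 + (ζ j : ℝ)) * nuProd_addParticle_mul (φ := φ) hm ζ i

theorem tsum_nuProd_mul_rate_comp_moveParticle [DecidableEq Λ] (hm : 0 < m) {i j : Λ}
    (hij : i ≠ j) (F : (Λ → ℕ) → ℝ) :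
    ∑' η, nuProd m φ η * ((η i : ℝ) * (m / 2 + (η j : ℝ)) * F (moveParticle η i j)) =
      ∑' η, nuProd m φ η * ((η j : ℝ) * (m / 2 + (η i : ℝ)) * F η) := by
  rw [tsum_eq_tsum_addParticle i fun η h => by simp [h],
    tsum_eq_tsum_addParticle
      (g := fun η => nuProd m φ η * ((η j : ℝ) * (m / 2 + η i) * F η)) j
      fun η h => by simp [h]]
  refine tsum_congr fun ζ => ?_
  rw [moveParticle_addParticle hij]
  linear_combination F (addParticle ζ j) *
    (nuProd_addParticle_mul_rate (φ := φ) hm hij ζ -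
      nuProd_addParticle_mul_rate (φ := φ) hm hij.symm ζ)

end Product

section Summability

variable {Λ : Type*} [Fintype Λ] {m φ : ℝ}

theorem coord_le_prod_add_add_one (hm : 0 ≤ m) (η : Λ → ℕ) (i : Λ) :
    (η i : ℝ) ≤ ∏ k, (m / 2 + η k + 1) :=
  calc (η i : ℝ)
      ≤ ∏ k ∈ {i}, (m / 2 + η k + 1) := by rw [prod_singleton]; linarith
    _ ≤ ∏ k, (m / 2 + η k + 1) :=
        prod_le_prod_of_subset_of_one_le (subset_univ _) (fun k _ => by positivity)
          fun k _ _ => by linarith [(η k).cast_nonneg (α := ℝ)]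

theorem rate_le_prod_add_add_one [DecidableEq Λ] (hm : 0 ≤ m) (η : Λ → ℕ) {i j : Λ}
    (hij : i ≠ j) : (η i : ℝ) * (m / 2 + η j) ≤ ∏ k, (m / 2 + η k + 1) :=
  calc (η i : ℝ) * (m / 2 + η j)
      ≤ (m / 2 + η i + 1) * (m / 2 + η j + 1) :=
        mul_le_mul (by linarith) (by linarith) (by positivity) (by positivity)
    _ = ∏ k ∈ {i, j}, (m / 2 + η k + 1) :=
        (prod_pair (f := fun k => m / 2 + (η k : ℝ) + 1) hij).symm
    _ ≤ ∏ k, (m / 2 + η k + 1) :=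
        prod_le_prod_of_subset_of_one_le (subset_univ _) (fun k _ => by positivity)
          fun k _ _ => by linarith [(η k).cast_nonneg (α := ℝ)]

theorem summable_nuProd_mul_of_abs_le (hm : 0 < m) (hφ0 : 0 ≤ φ) (hφ1 : φ < 1)
    {G : (Λ → ℕ) → ℝ} {C : ℝ} (hG : ∀ η, |G η| ≤ C * ∏ k, (m / 2 + η k + 1)) :
    Summable fun η => nuProd m φ η * G η := by
  have henv := (summable_pi_prod_of_nonneg (Λ := Λ)
    (fun n => mul_nonneg (by positivity) (nuMarginal_nonneg hm hφ0 hφ1.le n))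
    (summable_add_add_one_mul_nuMarginal hm hφ0 hφ1)).mul_left C
  refine henv.of_norm_bounded fun η => ?_
  rw [Real.norm_eq_abs, abs_mul, abs_of_nonneg (nuProd_nonneg hm hφ0 hφ1.le η), prod_mul_distrib]
  calc nuProd m φ η * |G η| ≤ nuProd m φ η * (C * ∏ k, (m / 2 + η k + 1)) :=
        mul_le_mul_of_nonneg_left (hG η) (nuProd_nonneg hm hφ0 hφ1.le η)
    _ = C * ((∏ k, (m / 2 + η k + 1)) * ∏ k, nuMarginal m φ (η k)) := by rw [nuProd]; ring

theorem summable_nuProd_mul_coord_mul (hm : 0 < m) (hφ0 : 0 ≤ φ) (hφ1 : φ < 1) (i : Λ)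
    {F : (Λ → ℕ) → ℝ} {C : ℝ} (hF : ∀ η, |F η| ≤ C) :
    Summable fun η => nuProd m φ η * ((η i : ℝ) * F η) :=
  summable_nuProd_mul_of_abs_le hm hφ0 hφ1 fun η => by
    rw [abs_mul, Nat.abs_cast, mul_comm C]
    exact mul_le_mul (coord_le_prod_add_add_one hm.le η i) (hF η) (abs_nonneg _)
      (prod_nonneg fun k _ => by positivity)

theorem summable_nuProd_mul_rate_mul [DecidableEq Λ] (hm : 0 < m) (hφ0 : 0 ≤ φ) (hφ1 : φ < 1)
    {i j : Λ} (hij : i ≠ j) {F : (Λ → ℕ) → ℝ} {C : ℝ} (hF : ∀ η, |F η| ≤ C) :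
    Summable fun η => nuProd m φ η * ((η i : ℝ) * (m / 2 + η j) * F η) :=
  summable_nuProd_mul_of_abs_le hm hφ0 hφ1 fun η => by
    rw [abs_mul, abs_of_nonneg (by positivity), mul_comm C]
    exact mul_le_mul (rate_le_prod_add_add_one hm.le η hij) (hF η) (abs_nonneg _)
      (prod_nonneg fun k _ => by positivity)

end Summability

theorem hasSum_nuProd_mul_rate_mul_sub {Λ : Type*} [Fintype Λ] [DecidableEq Λ] {m φ : ℝ}
    (hm : 0 < m) (hφ0 : 0 ≤ φ) (hφ1 : φ < 1) {i j : Λ} (hij : i ≠ j) {f : (Λ → ℕ) → ℝ}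
    {C : ℝ} (hf : ∀ η, |f η| ≤ C) :
    HasSum
      (fun η => nuProd m φ η * ((η i : ℝ) * (m / 2 + η j) * (f (moveParticle η i j) - f η)))
      (m / 2 * ∑' η, nuProd m φ η * ((η j : ℝ) * f η) -
        m / 2 * ∑' η, nuProd m φ η * ((η i : ℝ) * f η)) := by
  have hmove := summable_nuProd_mul_rate_mul hm hφ0 hφ1 hij
    (F := fun η => f (moveParticle η i j)) fun η => hf _
  have hstay := summable_nuProd_mul_rate_mul hm hφ0 hφ1 hij hf
  have hback := summable_nuProd_mul_rate_mul hm hφ0 hφ1 hij.symm hf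
  have hi := (summable_nuProd_mul_coord_mul hm hφ0 hφ1 i hf).mul_left (m / 2)
  have hj := (summable_nuProd_mul_coord_mul hm hφ0 hφ1 j hf).mul_left (m / 2)
  refine ((hmove.sub hstay).hasSum_iff.2 ?_).congr_fun fun η => by ring
  rw [hmove.tsum_sub hstay, tsum_nuProd_mul_rate_comp_moveParticle hm hij, ← hback.tsum_sub hstay,
    ← tsum_mul_left, ← tsum_mul_left, ← hj.tsum_sub hi]
  exact tsum_congr fun η => by ring

theorem inclusion_stationary_doubly_stochastic
    {Λ : Type*} [Fintype Λ] [DecidableEq Λ]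
    (m : ℝ) (hm : 0 < m)
    (p : Λ → Λ → ℝ) (hp_diag : ∀ i, p i i = 0)
    (hp_ds : ∀ i k, ∑ j, (p i j - p j k) = 0)
    (φ : ℝ) (hφ0 : 0 ≤ φ) (hφ1 : φ < 1)
    (f : (Λ → ℕ) → ℝ) (hf : ∃ C, ∀ η, |f η| ≤ C) :
    Summable (fun η : Λ → ℕ =>
      |nuProd m φ η *
        ∑ i, ∑ j, p i j * (η i : ℝ) * (m / 2 + (η j : ℝ)) *
          (f (moveParticle η i j) - f η)|) ∧
    ∑' η : Λ → ℕ,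
      nuProd m φ η *
        ∑ i, ∑ j, p i j * (η i : ℝ) * (m / 2 + (η j : ℝ)) *
          (f (moveParticle η i j) - f η) = 0 := by
  obtain ⟨C, hC⟩ := hf
  let B : Λ → ℝ := fun k => m / 2 * ∑' η, nuProd m φ η * ((η k : ℝ) * f η)
  have hpair : ∀ i j, HasSum (fun η => nuProd m φ η *
      (p i j * (η i : ℝ) * (m / 2 + (η j : ℝ)) * (f (moveParticle η i j) - f η)))
      (p i j * (B j - B i)) := by
    intro i j
    rcases eq_or_ne i j with rfl | hij
    · simp [hp_diag]
    · exact ((hasSum_nuProd_mul_rate_mul_sub hm hφ0 hφ1 hij hC).mul_left (p i j)).congr_fun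
        fun η => by ring
  have htotal := hasSum_sum (s := univ) fun i _ => hasSum_sum (s := univ) fun j _ => hpair i j
  simp only [← mul_sum] at htotal
  refine ⟨htotal.summable.abs, htotal.tsum_eq.trans (sum_sum_mul_sub_eq_zero (fun i => ?_) B)⟩
  simpa [sum_sub_distrib, sub_eq_zero] using hp_ds i i
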